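/- Let n be a positive natural number, let D_A and D_B be n×n real matrices, let d ∈ ℝⁿ, and let ε > 0 be a real number. Define the diagonal matrix Ψ = diag(e^{d_1}, …, e^{d_n}), define N = Ψ·(D_Aᵀ·D_A + D_B − D_Bᵀ + ε·I), and define D_zw = exp(−N). Then every eigenvalue μ ∈ ℂ of D_zw (viewing D_zw as a complex matrix) satisfies |μ| < 1; that is, the spectral radius of D_zw is strictly less than 1. -/

import Mathlib

/-!
Write `N = Ψ S`. If `N v = λ v` with `v ≠ 0`, then `S v = λ Ψ⁻¹ v`, so `v* S v = λ · v* Ψ⁻¹ v`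
with `v* Ψ⁻¹ v > 0`; taking real parts, `Re λ` has the sign of
`Re (v* S v) = v* (D_Aᵀ D_A + ε I) v > 0`. A common eigenvector of the commuting matrices `N` and
`exp (−N)` shows that every eigenvalue of `exp (−N)` is `exp (−λ)` for such a `λ`, and
`|exp (−λ)| = exp (−Re λ) < 1`.
-/

open Matrix NormedSpace
open scoped ComplexOrder

namespace Module.End

variable {K V : Type*} [Field K] [IsAlgClosed K] [AddCommGroup V] [Module K V]
  [FiniteDimensional K V]

theorem exists_hasEigenvector_of_commute {f g : End K V} (hfg : Commute f g) {μ : K}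
    (hμ : g.HasEigenvalue μ) : ∃ c v, f.HasEigenvector c v ∧ g.HasEigenvector μ v := by
  have hmaps : ∀ x ∈ g.eigenspace μ, f x ∈ g.eigenspace μ :=
    mapsTo_genEigenspace_of_comm hfg.symm μ 1
  have : Nontrivial (g.eigenspace μ) := Submodule.nontrivial_iff_ne_bot.mpr hμ
  obtain ⟨c, hc⟩ := exists_eigenvalue (f.restrict hmaps)
  obtain ⟨w, hw⟩ := hc.exists_hasEigenvector
  have hw0 : (w : V) ≠ 0 := by simpa using hw.2
  refine ⟨c, w, ⟨mem_eigenspace_iff.mpr ?_, hw0⟩, w.2, hw0⟩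
  simpa using congrArg Subtype.val hw.apply_eq_smul

end Module.End

namespace Matrix

theorem transpose_map_ofReal {m n : Type*} (A : Matrix m n ℝ) :
    Aᵀ.map Complex.ofReal = (A.map Complex.ofReal)ᴴ := by
  ext
  simp

variable {n : Type*} [Fintype n]

theorem exists_mulVec_eq_smul_of_mem_spectrum [DecidableEq n] {K : Type*} [Field K]
    {A : Matrix n n K} {μ : K} (h : μ ∈ spectrum K A) : ∃ v ≠ 0, A *ᵥ v = μ • v := by
  rw [← spectrum_toLin', ← Module.End.hasEigenvalue_iff_mem_spectrum] at h
  obtain ⟨v, hv⟩ := h.exists_hasEigenvector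
  exact ⟨v, hv.2, by simpa using hv.apply_eq_smul⟩

section Exp

variable [DecidableEq n]

attribute [local instance] Matrix.linftyOpNormedRing Matrix.linftyOpNormedAlgebra

theorem exp_mulVec_of_mulVec_eq_smul {𝕂 : Type*} [RCLike 𝕂] {A : Matrix n n 𝕂} {v : n → 𝕂}
    {c : 𝕂} (h : A *ᵥ v = c • v) : exp A *ᵥ v = exp c • v := by
  -- every column of `replicateCol n v` is `v`, so `A` acts on it as the scalar `c`
  have hsemi : SemiconjBy (replicateCol n v) (algebraMap 𝕂 _ c) A := by
    rw [SemiconjBy, ← replicateCol_mulVec, h, Algebra.algebraMap_eq_smul_one, mul_smul_comm,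
      mul_one, replicateCol_smul]
  have hexp := hsemi.exp_right
  rw [← algebraMap_exp_comm, SemiconjBy, Algebra.algebraMap_eq_smul_one, mul_smul_comm,
    mul_one, ← replicateCol_smul, ← replicateCol_mulVec] at hexp
  funext i
  exact (congrFun₂ hexp i i).symm

theorem spectrum_exp_subset (A : Matrix n n ℂ) :
    spectrum ℂ (exp A) ⊆ Complex.exp '' spectrum ℂ A := by
  intro μ hμ
  rw [← spectrum_toLin', ← Module.End.hasEigenvalue_iff_mem_spectrum] at hμ
  have hcomm : Commute (toLin' A) (toLin' (exp A)) :=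
    (Commute.refl A).exp_right.map toLinAlgEquiv'
  obtain ⟨c, v, hA, hexpA⟩ := Module.End.exists_hasEigenvector_of_commute hcomm hμ
  have hAv : A *ᵥ v = c • v := by simpa using hA.apply_eq_smul
  have hμv : exp A *ᵥ v = μ • v := by simpa using hexpA.apply_eq_smul
  refine ⟨c, ?_, ?_⟩
  · rw [← spectrum_toLin', ← Module.End.hasEigenvalue_iff_mem_spectrum]
    exact Module.End.hasEigenvalue_of_hasEigenvector hA
  · rw [Complex.exp_eq_exp_ℂ]
    exact smul_left_injective ℂ hA.2 ((exp_mulVec_of_mulVec_eq_smul hAv).symm.trans hμv)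

theorem exp_map_ofReal (A : Matrix n n ℝ) :
    exp (A.map Complex.ofReal) = (exp A).map Complex.ofReal :=
  (map_exp Complex.ofRealHom.mapMatrix
    (Continuous.matrix_map continuous_id Complex.continuous_ofReal) A).symm

end Exp

variable {𝕜 : Type*} [RCLike 𝕜]

theorem re_dotProduct_add_conjTranspose_mulVec (S : Matrix n n 𝕜) (v : n → 𝕜) :
    RCLike.re (star v ⬝ᵥ ((S + Sᴴ) *ᵥ v)) = 2 * RCLike.re (star v ⬝ᵥ (S *ᵥ v)) := by
  have h : star v ⬝ᵥ (Sᴴ *ᵥ v) = star (star v ⬝ᵥ (S *ᵥ v)) := by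
    rw [dotProduct_mulVec, ← star_mulVec, star_dotProduct]
  rw [add_mulVec, dotProduct_add, map_add, h, RCLike.star_def, RCLike.conj_re, two_mul]

theorem re_pos_of_mem_spectrum_mul [DecidableEq n] {P S : Matrix n n 𝕜} (hP : P.PosDef)
    (hS : (S + Sᴴ).PosDef) {c : 𝕜} (hc : c ∈ spectrum 𝕜 (P * S)) : 0 < RCLike.re c := by
  obtain ⟨v, hv0, hv⟩ := exists_mulVec_eq_smul_of_mem_spectrum hc
  have hSv : S *ᵥ v = c • (P⁻¹ *ᵥ v) := by
    rw [← mulVec_smul, ← hv, mulVec_mulVec, ← mul_assoc,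
      nonsing_inv_mul _ (P.isUnit_iff_isUnit_det.mp hP.isUnit), one_mul]
  obtain ⟨hp, hp'⟩ := RCLike.pos_iff.mp (hP.inv.dotProduct_mulVec_pos hv0)
  have hq := hS.re_dotProduct_pos hv0
  rw [re_dotProduct_add_conjTranspose_mulVec, hSv, dotProduct_smul, smul_eq_mul, RCLike.mul_re,
    hp', mul_zero, sub_zero] at hq
  nlinarith

theorem posDef_add_conjTranspose_of_gram_add_skew [DecidableEq n] (A B : Matrix n n 𝕜)
    {ε : ℝ} (hε : 0 < ε) :
    ((Aᴴ * A + B - Bᴴ + (ε : 𝕜) • 1) + (Aᴴ * A + B - Bᴴ + (ε : 𝕜) • 1)ᴴ).PosDef := by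
  have hsum : (Aᴴ * A + B - Bᴴ + (ε : 𝕜) • 1) + (Aᴴ * A + B - Bᴴ + (ε : 𝕜) • 1)ᴴ =
      (Aᴴ * A + Aᴴ * A) + ((ε : 𝕜) • 1 + (ε : 𝕜) • 1) := by
    simp only [conjTranspose_add, conjTranspose_sub, conjTranspose_mul,
      conjTranspose_conjTranspose, conjTranspose_smul, conjTranspose_one, RCLike.star_def,
      RCLike.conj_ofReal]
    abel
  have hAA := posSemidef_conjTranspose_mul_self A
  have hεI : ((ε : 𝕜) • (1 : Matrix n n 𝕜)).PosDef := PosDef.one.smul (RCLike.ofReal_pos.mpr hε)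
  rw [hsum]
  exact PosDef.posSemidef_add (hAA.add hAA) (hεI.add hεI)

end Matrix

theorem spectral_radius_of_direct_parameterization_lt_one_general
    (n : ℕ) (DA DB : Matrix (Fin n) (Fin n) ℝ) (d : Fin n → ℝ)
    (ε : ℝ) (hε : 0 < ε)
    (Ψ : Matrix (Fin n) (Fin n) ℝ) (hΨ : Ψ = Matrix.diagonal fun i => Real.exp (d i))
    (N : Matrix (Fin n) (Fin n) ℝ)
    (hN : N = Ψ * (DAᵀ * DA + DB - DBᵀ + ε • (1 : Matrix (Fin n) (Fin n) ℝ)))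
    (Dzw : Matrix (Fin n) (Fin n) ℝ) (hD : Dzw = NormedSpace.exp (-N)) :
    ∀ μ ∈ spectrum ℂ (Dzw.map (Complex.ofReal)), ‖μ‖ < 1 := by
  have hNc : N.map Complex.ofReal = diagonal (fun i => (Real.exp (d i) : ℂ)) *
      ((DA.map Complex.ofReal)ᴴ * DA.map Complex.ofReal + DB.map Complex.ofReal
        - (DB.map Complex.ofReal)ᴴ + (ε : ℂ) • 1) := by
    have hεI : (ε • (1 : Matrix (Fin n) (Fin n) ℝ)).map Complex.ofReal = (ε : ℂ) • 1 := by
      ext i j; by_cases h : i = j <;> simp [h]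
    rw [hN, hΨ]
    change Complex.ofRealHom.mapMatrix _ = _
    simp only [map_mul, map_add, map_sub, RingHom.mapMatrix_apply,
      show ⇑Complex.ofRealHom = Complex.ofReal from rfl, transpose_map_ofReal, hεI,
      diagonal_map Complex.ofReal_zero]
  intro μ hμ
  rw [hD, ← exp_map_ofReal, Matrix.map_neg _ Complex.ofReal_neg, hNc] at hμ
  obtain ⟨c, hc, rfl⟩ := spectrum_exp_subset _ hμ
  rw [← spectrum.neg_eq, Set.mem_neg] at hc
  have hre := re_pos_of_mem_spectrum_mul (PosDef.diagonal fun i => by positivity)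
    (posDef_add_conjTranspose_of_gram_add_skew _ _ hε) hc
  rw [Complex.norm_exp, Real.exp_lt_one_iff]
  simpa using hre

/-- The direct parameterization of the paper: with
`Ψ = diag(e^{d_1}, …, e^{d_n})`, `N = Ψ (D_Aᵀ D_A + D_B − D_Bᵀ + ε I)` (`ε > 0`) and
`D_zw = exp (−N)`, every complex eigenvalue `μ` of `D_zw` satisfies `|μ| < 1`, i.e. the
spectral radius of `D_zw` is strictly less than `1`. -/
theorem spectral_radius_of_direct_parameterization_lt_one
    (n : ℕ) (hn : 0 < n) (DA DB : Matrix (Fin n) (Fin n) ℝ) (d : Fin n → ℝ)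
    (ε : ℝ) (hε : 0 < ε)
    (Ψ : Matrix (Fin n) (Fin n) ℝ) (hΨ : Ψ = Matrix.diagonal fun i => Real.exp (d i))
    (N : Matrix (Fin n) (Fin n) ℝ)
    (hN : N = Ψ * (DAᵀ * DA + DB - DBᵀ + ε • (1 : Matrix (Fin n) (Fin n) ℝ)))
    (Dzw : Matrix (Fin n) (Fin n) ℝ) (hD : Dzw = NormedSpace.exp (-N)) :
    ∀ μ ∈ spectrum ℂ (Dzw.map (Complex.ofReal)), ‖μ‖ < 1 :=
  spectral_radius_of_direct_parameterization_lt_one_general n DA DB d ε hε Ψ hΨ N hN Dzw hD
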